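/- arXiv:0907.2419 — 2 statements merged into one kernel-verified Lean document; each statement's English description precedes it below -/
import Mathlib

section
/- For Hermitian n×n matrices H and A and β > 0, log Tr e^{-βH} - (1/2) log Tr e^{-β(H+A)} - (1/2) log Tr e^{-β(H-A)} ≤ (β/2)·‖(H+A) + (H-A) - 2H‖ = 0; more generally, for Hermitian H, A, B, log Tr e^{-βH} - (1/2) log Tr e^{-β(H+A)} - (1/2) log Tr e^{-β(H+B)} ≤ (β/2)‖A + B‖. -/
/-!
Write `P = -βH`, `X = -β(H+A)`, `Y = -β(H+B)` and `W = -(β/2)(A+B)`, so that `X + Y = 2(P + W)`.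
The bound follows from two properties of `X ↦ log Tr e^X`: midpoint convexity,
`log Tr e^{(X+Y)/2} ≤ ½ (log Tr e^X + log Tr e^Y)`, and the Lipschitz bound
`log Tr e^P - log Tr e^{P+W} ≤ ‖W‖`. Both rest on the Peierls inequality `∑ᵢ exp Xᵢᵢ ≤ Tr e^X`,
which is Jensen's inequality for `exp` because `Xᵢᵢ` is an average of the eigenvalues of `X` with
weights `|Uᵢⱼ|²`. For convexity it is applied in an eigenbasis of `P + W`: there the eigenvalues
split as `λᵢ = (X'ᵢᵢ + Y'ᵢᵢ)/2`, and Cauchy–Schwarz bounds `∑ᵢ √(exp X'ᵢᵢ) √(exp Y'ᵢᵢ)`. For the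
Lipschitz bound it is applied in an eigenbasis of `P`, using `|W'ᵢᵢ| ≤ ‖W‖`.
-/

open Matrix

/-- The real part of the trace of the matrix exponential. -/
noncomputable def trExp {n : ℕ} (A : Matrix (Fin n) (Fin n) ℂ) : ℝ :=
  ((NormedSpace.exp A).trace).re

/-- The operator (spectral) norm of a matrix. -/
noncomputable def opNorm {n : ℕ} (A : Matrix (Fin n) (Fin n) ℂ) : ℝ :=
  ‖Matrix.toEuclideanCLM (𝕜 := ℂ) A‖

open scoped Matrix.Norms.L2Operator

namespace Matrix

variable {ι : Type*} [Fintype ι] [DecidableEq ι]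

lemma exp_unitary_conj {U : Matrix ι ι ℂ} (hU : U ∈ unitaryGroup ι ℂ) (X : Matrix ι ι ℂ) :
    NormedSpace.exp (U * X * star U) = U * NormedSpace.exp X * star U := by
  have hinv : U⁻¹ = star U := inv_eq_right_inv (mem_unitaryGroup_iff.mp hU)
  rw [← hinv, exp_conj U X (Unitary.isUnit_coe (U := ⟨U, hU⟩))]

lemma IsHermitian.exp_eq_conj_diagonal {X : Matrix ι ι ℂ} (hX : X.IsHermitian) :
    NormedSpace.exp X = (hX.eigenvectorUnitary : Matrix ι ι ℂ)
      * diagonal (fun j => (Real.exp (hX.eigenvalues j) : ℂ))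
      * star (hX.eigenvectorUnitary : Matrix ι ι ℂ) := by
  conv_lhs => rw [hX.spectral_theorem, Unitary.conjStarAlgAut_apply]
  rw [exp_unitary_conj hX.eigenvectorUnitary.2, exp_diagonal]
  congr 3
  funext j
  simp [← Complex.exp_eq_exp_ℂ, Complex.ofReal_exp]

lemma mul_diagonal_mul_star_apply_self (U : Matrix ι ι ℂ) (d : ι → ℝ) (i : ι) :
    (U * diagonal (fun j => (d j : ℂ)) * star U) i i
      = ((∑ j, Complex.normSq (U i j) * d j : ℝ) : ℂ) := by
  rw [mul_apply]
  simp only [mul_diagonal, star_apply, Complex.ofReal_sum, Complex.ofReal_mul,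
    Complex.normSq_eq_conj_mul_self, RCLike.star_def]
  exact Finset.sum_congr rfl fun j _ => by ring

lemma sum_normSq_apply_of_mem_unitaryGroup {U : Matrix ι ι ℂ} (hU : U ∈ unitaryGroup ι ℂ)
    (i : ι) : ∑ j, Complex.normSq (U i j) = 1 := by
  have h := mul_diagonal_mul_star_apply_self U (fun _ => 1) i
  simp only [Complex.ofReal_one, diagonal_one, mul_one, mem_unitaryGroup_iff.mp hU,
    one_apply_eq] at h
  exact_mod_cast h.symm

theorem IsHermitian.exp_re_apply_self_le {X : Matrix ι ι ℂ} (hX : X.IsHermitian) (i : ι) :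
    Real.exp (X i i).re ≤ (NormedSpace.exp X i i).re := by
  set U := (hX.eigenvectorUnitary : Matrix ι ι ℂ)
  have hdiag : X i i = ((∑ j, Complex.normSq (U i j) * hX.eigenvalues j : ℝ) : ℂ) := by
    rw [← mul_diagonal_mul_star_apply_self]
    conv_lhs => rw [hX.spectral_theorem, Unitary.conjStarAlgAut_apply]
    rfl
  rw [hdiag, hX.exp_eq_conj_diagonal, mul_diagonal_mul_star_apply_self, Complex.ofReal_re,
    Complex.ofReal_re]
  simpa only [smul_eq_mul] using convexOn_exp.map_sum_le (fun j _ => Complex.normSq_nonneg _)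
    (sum_normSq_apply_of_mem_unitaryGroup hX.eigenvectorUnitary.2 i) (fun j _ => Set.mem_univ _)

theorem IsHermitian.sum_exp_re_diag_le {X : Matrix ι ι ℂ} (hX : X.IsHermitian) :
    ∑ i, Real.exp (X i i).re ≤ (NormedSpace.exp X).trace.re := by
  rw [trace, Complex.re_sum]
  exact Finset.sum_le_sum fun i _ => hX.exp_re_apply_self_le i

lemma norm_apply_self_le (M : Matrix ι ι ℂ) (i : ι) : ‖M i i‖ ≤ ‖M‖ := by
  have h := M.l2_opNorm_mulVec (PiLp.single 2 i 1)
  simp only [PiLp.norm_single, norm_one, mul_one, PiLp.ofLp_single, mulVec_single_one] at h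
  exact (PiLp.norm_apply_le _ i).trans h

end Matrix

variable {n : ℕ}

lemma opNorm_eq_norm (M : Matrix (Fin n) (Fin n) ℂ) : opNorm M = ‖M‖ := rfl

lemma trExp_eq_sum_exp_eigenvalues {X : Matrix (Fin n) (Fin n) ℂ} (hX : X.IsHermitian) :
    trExp X = ∑ j, Real.exp (hX.eigenvalues j) := by
  rw [trExp, hX.exp_eq_conj_diagonal, trace_mul_cycle,
    mem_unitaryGroup_iff'.mp hX.eigenvectorUnitary.2, one_mul, trace_diagonal,
    ← Complex.ofReal_sum, Complex.ofReal_re]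

lemma trExp_of_isEmpty [IsEmpty (Fin n)] (X : Matrix (Fin n) (Fin n) ℂ) : trExp X = 0 := by
  simp [trExp, trace]

lemma trExp_pos [Nonempty (Fin n)] {X : Matrix (Fin n) (Fin n) ℂ} (hX : X.IsHermitian) :
    0 < trExp X := by
  rw [trExp_eq_sum_exp_eigenvalues hX]
  exact Finset.sum_pos (fun i _ => Real.exp_pos _) Finset.univ_nonempty

lemma trExp_star_mul_mul {V : Matrix (Fin n) (Fin n) ℂ} (hV : V ∈ unitaryGroup (Fin n) ℂ)
    (X : Matrix (Fin n) (Fin n) ℂ) : trExp (star V * X * V) = trExp X := by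
  have h := exp_unitary_conj (Unitary.star_mem hV) X
  rw [star_star] at h
  rw [trExp, h, trace_mul_cycle, mem_unitaryGroup_iff.mp hV, one_mul, trExp]

lemma Matrix.IsHermitian.sum_exp_re_conj_diag_le_trExp {X V : Matrix (Fin n) (Fin n) ℂ}
    (hX : X.IsHermitian) (hV : V ∈ unitaryGroup (Fin n) ℂ) :
    ∑ i, Real.exp ((star V * X * V) i i).re ≤ trExp X := by
  rw [← trExp_star_mul_mul hV X]
  exact (isHermitian_conjTranspose_mul_mul V hX).sum_exp_re_diag_le

lemma Matrix.IsHermitian.re_conj_eigenvectorUnitary_apply_self {M : Matrix (Fin n) (Fin n) ℂ}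
    (hM : M.IsHermitian) (i : Fin n) :
    ((star (hM.eigenvectorUnitary : Matrix (Fin n) (Fin n) ℂ) * M * hM.eigenvectorUnitary) i i).re
      = hM.eigenvalues i := by
  have h := hM.conjStarAlgAut_star_eigenvectorUnitary
  rw [Unitary.conjStarAlgAut_star_apply] at h
  simp [h]

theorem trExp_le_sqrt_mul_sqrt_of_add_eq {X Y M : Matrix (Fin n) (Fin n) ℂ} (hX : X.IsHermitian)
    (hY : Y.IsHermitian) (hM : M.IsHermitian) (hsum : X + Y = M + M) :
    trExp M ≤ √(trExp X) * √(trExp Y) := by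
  set U := (hM.eigenvectorUnitary : Matrix (Fin n) (Fin n) ℂ)
  have hU : U ∈ unitaryGroup (Fin n) ℂ := hM.eigenvectorUnitary.2
  have hsplit : ∀ i, hM.eigenvalues i
      = ((star U * X * U) i i).re / 2 + ((star U * Y * U) i i).re / 2 := by
    intro i
    have h := congrArg (fun Z => ((star U * Z * U) i i).re) hsum
    simp only [mul_add, add_mul, Matrix.add_apply, Complex.add_re] at h
    rw [hM.re_conj_eigenvectorUnitary_apply_self] at h
    linarith
  calc trExp M = ∑ i, Real.exp (hM.eigenvalues i) := trExp_eq_sum_exp_eigenvalues hM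
    _ = ∑ i, √(Real.exp ((star U * X * U) i i).re) * √(Real.exp ((star U * Y * U) i i).re) := by
        refine Finset.sum_congr rfl fun i _ => ?_
        rw [hsplit i, Real.exp_add, Real.exp_half, Real.exp_half]
    _ ≤ √(∑ i, Real.exp ((star U * X * U) i i).re) * √(∑ i, Real.exp ((star U * Y * U) i i).re) :=
        Real.sum_sqrt_mul_sqrt_le _ (fun i => (Real.exp_pos _).le) (fun i => (Real.exp_pos _).le)
    _ ≤ √(trExp X) * √(trExp Y) := by
        gcongr
        · exact hX.sum_exp_re_conj_diag_le_trExp hU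
        · exact hY.sum_exp_re_conj_diag_le_trExp hU

theorem exp_neg_opNorm_mul_trExp_le {P W : Matrix (Fin n) (Fin n) ℂ} (hP : P.IsHermitian)
    (hW : W.IsHermitian) : Real.exp (-opNorm W) * trExp P ≤ trExp (P + W) := by
  set U := (hP.eigenvectorUnitary : Matrix (Fin n) (Fin n) ℂ)
  have hU : U ∈ unitaryGroup (Fin n) ℂ := hP.eigenvectorUnitary.2
  have hbound : ∀ i, -opNorm W ≤ ((star U * W * U) i i).re := by
    intro i
    have h := (star U * W * U).norm_apply_self_le i
    rw [CStarRing.norm_mul_mem_unitary _ hU,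
      CStarRing.norm_mem_unitary_mul _ (Unitary.star_mem hU)] at h
    rw [opNorm_eq_norm]
    linarith [Complex.abs_re_le_norm ((star U * W * U) i i), neg_abs_le ((star U * W * U) i i).re]
  calc Real.exp (-opNorm W) * trExp P = ∑ i, Real.exp (-opNorm W + hP.eigenvalues i) := by
        simp only [trExp_eq_sum_exp_eigenvalues hP, Finset.mul_sum, Real.exp_add]
    _ ≤ ∑ i, Real.exp ((star U * (P + W) * U) i i).re := by
        gcongr with i
        rw [mul_add, add_mul, Matrix.add_apply, Complex.add_re,
          hP.re_conj_eigenvectorUnitary_apply_self]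
        linarith [hbound i]
    _ ≤ trExp (P + W) := (hP.add hW).sum_exp_re_conj_diag_le_trExp hU

theorem log_trExp_le_of_add_eq {X Y M : Matrix (Fin n) (Fin n) ℂ} (hX : X.IsHermitian)
    (hY : Y.IsHermitian) (hM : M.IsHermitian) (hsum : X + Y = M + M) :
    Real.log (trExp M) ≤ (Real.log (trExp X) + Real.log (trExp Y)) / 2 := by
  obtain _ | _ := isEmpty_or_nonempty (Fin n)
  · simp [trExp_of_isEmpty]
  have hXpos := trExp_pos hX
  have hYpos := trExp_pos hY
  calc Real.log (trExp M) ≤ Real.log (√(trExp X) * √(trExp Y)) :=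
        Real.log_le_log (trExp_pos hM) (trExp_le_sqrt_mul_sqrt_of_add_eq hX hY hM hsum)
    _ = (Real.log (trExp X) + Real.log (trExp Y)) / 2 := by
        rw [Real.log_mul (Real.sqrt_pos.2 hXpos).ne' (Real.sqrt_pos.2 hYpos).ne',
          Real.log_sqrt hXpos.le, Real.log_sqrt hYpos.le]
        ring

theorem log_trExp_sub_log_trExp_add_le_opNorm {P W : Matrix (Fin n) (Fin n) ℂ}
    (hP : P.IsHermitian) (hW : W.IsHermitian) :
    Real.log (trExp P) - Real.log (trExp (P + W)) ≤ opNorm W := by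
  obtain _ | _ := isEmpty_or_nonempty (Fin n)
  · simp [trExp_of_isEmpty, opNorm_eq_norm]
  have h := Real.log_le_log (mul_pos (Real.exp_pos _) (trExp_pos hP))
    (exp_neg_opNorm_mul_trExp_le hP hW)
  rw [Real.log_mul (Real.exp_pos _).ne' (trExp_pos hP).ne', Real.log_exp] at h
  linarith

/-- For Hermitian `H`, `A`, `B` and `β > 0`:
`log Tr e^{-βH} - ½ log Tr e^{-β(H+A)} - ½ log Tr e^{-β(H+B)} ≤ (β/2)‖A + B‖`,
and in particular (taking `B = -A`) the symmetrized difference is `≤ 0`. -/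
theorem logTrExp_symmetrized_bound {n : ℕ} (β : ℝ) (hβ : 0 < β)
    (H A B : Matrix (Fin n) (Fin n) ℂ)
    (hH : H.IsHermitian) (hA : A.IsHermitian) (hB : B.IsHermitian) :
    (Real.log (trExp ((-β : ℂ) • H))
        - (1 / 2) * Real.log (trExp ((-β : ℂ) • (H + A)))
        - (1 / 2) * Real.log (trExp ((-β : ℂ) • (H + B)))
      ≤ (β / 2) * opNorm (A + B))
    ∧ (Real.log (trExp ((-β : ℂ) • H))
        - (1 / 2) * Real.log (trExp ((-β : ℂ) • (H + A)))
        - (1 / 2) * Real.log (trExp ((-β : ℂ) • (H - A)))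
      ≤ 0) := by
  have hreal : ∀ r : ℝ, IsSelfAdjoint (r : ℂ) := Complex.conj_ofReal
  have key : ∀ B : Matrix (Fin n) (Fin n) ℂ, B.IsHermitian →
      Real.log (trExp ((-β : ℂ) • H))
        - (1 / 2) * Real.log (trExp ((-β : ℂ) • (H + A)))
        - (1 / 2) * Real.log (trExp ((-β : ℂ) • (H + B)))
      ≤ (β / 2) * opNorm (A + B) := by
    intro B hB
    have hP := hH.smul (hreal (-β))
    have hW := (hA.add hB).smul (hreal (-(β / 2)))
    have hmid := log_trExp_le_of_add_eq ((hH.add hA).smul (hreal (-β)))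
      ((hH.add hB).smul (hreal (-β))) (hP.add hW) (by push_cast; module)
    have hlip := log_trExp_sub_log_trExp_add_le_opNorm hP hW
    rw [opNorm_eq_norm, norm_smul, Complex.norm_real, Real.norm_eq_abs, abs_neg,
      abs_of_pos (half_pos hβ), ← opNorm_eq_norm] at hlip
    push_cast at hmid hlip
    linarith
  refine ⟨key B hB, ?_⟩
  simpa [← sub_eq_add_neg, opNorm_eq_norm] using key (-A) hA.neg
end

section
/- The map V ↦ log Tr exp(H + V) on Hermitian n×n matrices is convex: for Hermitian H, A, B and t ∈ [0,1], log Tr exp(H + tA + (1-t)B) ≤ t · log Tr exp(H + A) + (1-t) · log Tr exp(H + B). -/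
/-!
Write `⟨D⟩_M = Re Tr (e^M D) / Tr e^M` for the expectation of `D` in the Gibbs state of `M`.
The Peierls–Bogoliubov inequality `log Tr e^M + ⟨X - M⟩_M ≤ log Tr e^X` says that `log Tr exp`
lies above its tangent at `M`. For `M = H + tA + (1-t)B` the tangent terms at `X = H + A` and
`X = H + B` cancel in the convex combination, which is convexity.

For Peierls–Bogoliubov, diagonalise `M = U diag(μ) U*` and let `x i = Re (U* X U) i i`. Then
`⟨X - M⟩_M = ∑ p i (x i - μ i)` with Gibbs weights `p i = e^(μ i) / Tr e^M`, so the finite Gibbs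
variational principle `∑ p i (x i - log p i) ≤ log ∑ e^(x i)` reduces the claim to Peierls'
inequality `∑ e^(x i) ≤ Tr e^X`. Writing `X = V diag(ν) V*`, that is Jensen's inequality for `exp`
along the rows of the stochastic matrix `|(U* V) i j|²`.
-/

open Matrix

theorem Real.sum_mul_sub_log_le_log_sum_exp {ι : Type*} (s : Finset ι) {p : ι → ℝ} (x : ι → ℝ)
    (hp : ∀ i ∈ s, 0 ≤ p i) (hp1 : ∑ i ∈ s, p i = 1) :
    ∑ i ∈ s, p i * (x i - log (p i)) ≤ log (∑ i ∈ s, exp (x i)) := by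
  have hs : s.Nonempty := Finset.nonempty_of_sum_ne_zero (f := p) (by simp [hp1])
  rw [le_log_iff_exp_le (Finset.sum_pos (fun i _ => exp_pos _) hs)]
  calc exp (∑ i ∈ s, p i * (x i - log (p i)))
      ≤ ∑ i ∈ s, p i * exp (x i - log (p i)) :=
        convexOn_exp.map_sum_le hp hp1 fun _ _ => Set.mem_univ _
    _ ≤ ∑ i ∈ s, exp (x i) := Finset.sum_le_sum fun i hi => ?_
  rcases (hp i hi).eq_or_lt with h | h
  · rw [← h, zero_mul]
    exact (exp_pos _).le
  · rw [exp_sub, exp_log h, mul_div_cancel₀ _ h.ne']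

namespace Matrix

variable {ι : Type*} [Fintype ι] [DecidableEq ι]

theorem re_mul_diagonal_mul_star_apply_self (W : Matrix ι ι ℂ) (d : ι → ℝ) (i : ι) :
    ((W * diagonal (RCLike.ofReal ∘ d : ι → ℂ) * star W) i i).re =
      ∑ j, Complex.normSq (W i j) * d j := by
  rw [mul_apply, Complex.re_sum]
  refine Finset.sum_congr rfl fun j _ => ?_
  rw [mul_diagonal, star_apply, RCLike.star_def, Function.comp_apply, mul_right_comm,
    Complex.mul_conj, Complex.re_ofReal_mul]
  rfl

theorem sum_normSq_apply_of_mul_star_eq_one {W : Matrix ι ι ℂ} (hW : W * star W = 1) (i : ι) :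
    ∑ j, Complex.normSq (W i j) = 1 := by
  simpa [hW] using (re_mul_diagonal_mul_star_apply_self W 1 i).symm

namespace IsHermitian

variable {M : Matrix ι ι ℂ}

theorem exp_eq_cfc (hM : M.IsHermitian) : NormedSpace.exp M = hM.cfc Real.exp := by
  set U : Matrix ι ι ℂ := (hM.eigenvectorUnitary : Matrix ι ι ℂ)
  have hinv : star U = U⁻¹ :=
    (Matrix.inv_eq_left_inv (Unitary.coe_star_mul_self hM.eigenvectorUnitary)).symm
  conv_lhs => rw [hM.spectral_theorem, Unitary.conjStarAlgAut_apply]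
  rw [IsHermitian.cfc, Unitary.conjStarAlgAut_apply]
  change NormedSpace.exp (U * _ * star U) = U * _ * star U
  rw [hinv, Matrix.exp_conj _ _ Unitary.isUnit_coe, exp_diagonal]
  congr 3
  ext i
  simp [← Complex.exp_eq_exp_ℂ, Complex.ofReal_exp]

theorem re_trace_cfc_mul (hM : M.IsHermitian) (f : ℝ → ℝ) (Y : Matrix ι ι ℂ) :
    (hM.cfc f * Y).trace.re = ∑ i, f (hM.eigenvalues i) *
      ((star (hM.eigenvectorUnitary : Matrix ι ι ℂ) * Y * hM.eigenvectorUnitary) i i).re := by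
  rw [IsHermitian.cfc, Unitary.conjStarAlgAut_apply, Matrix.mul_assoc, Matrix.mul_assoc,
    trace_mul_comm, Matrix.mul_assoc]
  simp only [trace, diag_apply, diagonal_mul, Complex.re_sum, Function.comp_apply]
  exact Finset.sum_congr rfl fun _ _ => Complex.re_ofReal_mul _ _

theorem star_eigenvectorUnitary_mul_mul_self (hM : M.IsHermitian) :
    star (hM.eigenvectorUnitary : Matrix ι ι ℂ) * M * (hM.eigenvectorUnitary : Matrix ι ι ℂ) =
      diagonal (RCLike.ofReal ∘ hM.eigenvalues) := by
  simpa using hM.conjStarAlgAut_star_eigenvectorUnitary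

theorem re_trace_exp (hM : M.IsHermitian) :
    (NormedSpace.exp M).trace.re = ∑ i, Real.exp (hM.eigenvalues i) := by
  have h := hM.re_trace_cfc_mul Real.exp 1
  rw [Matrix.mul_one, ← hM.exp_eq_cfc] at h
  simpa [Unitary.coe_star_mul_self] using h

theorem re_star_mul_cfc_mul_apply_self (hM : M.IsHermitian) (f : ℝ → ℝ) (U : Matrix ι ι ℂ)
    (i : ι) : ((star U * hM.cfc f * U) i i).re =
      ∑ j, Complex.normSq ((star U * hM.eigenvectorUnitary) i j) * f (hM.eigenvalues j) := by
  rw [← re_mul_diagonal_mul_star_apply_self]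
  simp only [IsHermitian.cfc, Unitary.conjStarAlgAut_apply, star_mul, star_star, Matrix.mul_assoc]
  rfl

theorem sum_exp_re_star_mul_mul_apply_self_le (hM : M.IsHermitian) {U : Matrix ι ι ℂ}
    (hU : U ∈ unitaryGroup ι ℂ) :
    ∑ i, Real.exp ((star U * M * U) i i).re ≤ (NormedSpace.exp M).trace.re := by
  set W := star U * hM.eigenvectorUnitary
  have hrow := sum_normSq_apply_of_mul_star_eq_one <| mem_unitaryGroup_iff.mp <|
    Submonoid.mul_mem _ (Unitary.star_mem hU) hM.eigenvectorUnitary.2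
  calc ∑ i, Real.exp ((star U * M * U) i i).re
      = ∑ i, Real.exp (∑ j, Complex.normSq (W i j) * hM.eigenvalues j) := by
        conv_lhs => rw [show M = hM.cfc id from hM.spectral_theorem]
        simp only [re_star_mul_cfc_mul_apply_self, id, W]
    _ ≤ ∑ i, ∑ j, Complex.normSq (W i j) * Real.exp (hM.eigenvalues j) :=
        Finset.sum_le_sum fun i _ => convexOn_exp.map_sum_le (fun j _ => Complex.normSq_nonneg _)
          (hrow i) fun _ _ => Set.mem_univ _
    _ = (star U * NormedSpace.exp M * U).trace.re := by
        simp only [hM.exp_eq_cfc, trace, diag_apply, Complex.re_sum,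
          re_star_mul_cfc_mul_apply_self, W]
    _ = (NormedSpace.exp M).trace.re := by
        rw [trace_mul_cycle, mem_unitaryGroup_iff.mp hU, Matrix.one_mul]

theorem log_re_trace_exp_add_div_le [Nonempty ι] (hM : M.IsHermitian) {X : Matrix ι ι ℂ}
    (hX : X.IsHermitian) :
    Real.log (NormedSpace.exp M).trace.re +
        (NormedSpace.exp M * (X - M)).trace.re / (NormedSpace.exp M).trace.re ≤
      Real.log (NormedSpace.exp X).trace.re := by
  set U : Matrix ι ι ℂ := (hM.eigenvectorUnitary : Matrix ι ι ℂ)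
  set μ := hM.eigenvalues
  set x : ι → ℝ := fun i => ((star U * X * U) i i).re
  set Z := (NormedSpace.exp M).trace.re
  have hZ : Z = ∑ i, Real.exp (μ i) := hM.re_trace_exp
  have hZpos : 0 < Z := hZ ▸ Finset.sum_pos (fun i _ => Real.exp_pos _) Finset.univ_nonempty
  have hgap : (NormedSpace.exp M * (X - M)).trace.re = ∑ i, Real.exp (μ i) * (x i - μ i) := by
    rw [hM.exp_eq_cfc, hM.re_trace_cfc_mul]
    simp [Matrix.mul_sub, Matrix.sub_mul, hM.star_eigenvectorUnitary_mul_mul_self, x, U, μ]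
  set p : ι → ℝ := fun i => Real.exp (μ i) / Z
  have hp1 : ∑ i, p i = 1 := by rw [← Finset.sum_div, ← hZ, div_self hZpos.ne']
  have hterm : ∀ i, p i * (x i - Real.log (p i)) =
      Real.exp (μ i) * (x i - μ i) / Z + p i * Real.log Z := fun i => by
    rw [Real.log_div (Real.exp_ne_zero _) hZpos.ne', Real.log_exp]
    ring
  calc Real.log Z + (NormedSpace.exp M * (X - M)).trace.re / Z
      = ∑ i, p i * (x i - Real.log (p i)) := by
        rw [Finset.sum_congr rfl fun i _ => hterm i, Finset.sum_add_distrib, ← Finset.sum_div,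
          ← Finset.sum_mul, hp1, hgap]
        ring
    _ ≤ Real.log (∑ i, Real.exp (x i)) :=
        Real.sum_mul_sub_log_le_log_sum_exp _ _ (fun i _ => by positivity) hp1
    _ ≤ Real.log (NormedSpace.exp X).trace.re :=
        Real.log_le_log (Finset.sum_pos (fun i _ => Real.exp_pos _) Finset.univ_nonempty)
          (hX.sum_exp_re_star_mul_mul_apply_self_le hM.eigenvectorUnitary.2)

end IsHermitian
end Matrix

/-- Peierls–Bogoliubov convexity: the map `V ↦ log Tr exp(H + V)` on Hermitian matrices
is convex along real segments. -/
theorem logTrExp_convex {n : ℕ} (H A B : Matrix (Fin n) (Fin n) ℂ)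
    (hH : H.IsHermitian) (hA : A.IsHermitian) (hB : B.IsHermitian)
    (t : ℝ) (ht : t ∈ Set.Icc (0 : ℝ) 1) :
    Real.log (trExp (H + (t : ℂ) • A + ((1 - t : ℝ) : ℂ) • B))
      ≤ t * Real.log (trExp (H + A)) + (1 - t) * Real.log (trExp (H + B)) := by
  obtain ⟨ht0, ht1⟩ := ht
  cases isEmpty_or_nonempty (Fin n)
  · simp [trExp, Matrix.trace]
  set M := H + (t : ℂ) • A + ((1 - t : ℝ) : ℂ) • B
  have hM : M.IsHermitian :=
    (hH.add (hA.smul (Complex.conj_ofReal t))).add (hB.smul (Complex.conj_ofReal _))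
  have hX := hM.log_re_trace_exp_add_div_le (hH.add hA)
  have hY := hM.log_re_trace_exp_add_div_le (hH.add hB)
  have hbalance :
      t * ((NormedSpace.exp M * (H + A - M)).trace.re / (NormedSpace.exp M).trace.re) +
        (1 - t) * ((NormedSpace.exp M * (H + B - M)).trace.re / (NormedSpace.exp M).trace.re) =
      0 := by
    have h : (t : ℂ) • (H + A - M) + ((1 - t : ℝ) : ℂ) • (H + B - M) = 0 := by
      simp only [M]
      push_cast
      module
    simpa [Matrix.mul_add, Matrix.mul_smul, trace_add, trace_smul, add_div, mul_div_assoc] using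
      congrArg (fun D => (NormedSpace.exp M * D).trace.re / (NormedSpace.exp M).trace.re) h
  unfold trExp
  linarith [mul_le_mul_of_nonneg_left hX ht0, mul_le_mul_of_nonneg_left hY (sub_nonneg.2 ht1)]
end
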